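/- Let G be a group, S a subgroup of G, and C a subgroup with C ≤ C_G(S). Assume N_{C_G(S)}(C) = C, and that for every g ∈ N_G(S) there exists h ∈ C_G(S) with (C^g)^h = C. Then N_G(S) = C_G(S)·N_{N_G(S)}(C), and there is an injective group homomorphism from N_G(S)/C_G(S) into N_G(C)/C. If moreover N_G(C) ≤ N_G(S), then this gives a group isomorphism N_G(S)/C_G(S) ≅ N_G(C)/C. -/

import Mathlib

open Pointwise

/-- The conjugate `H^g = g⁻¹ * H * g` of a subgroup `H` by an element `g`. -/
def conjSub {G : Type*} [Group G] (H : Subgroup G) (g : G) : Subgroup G :=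
  H.map (MulAut.conj g⁻¹).toMonoidHom

/-- The centralizer `C_G(S)` is a normal subgroup of the normalizer `N_G(S)`. -/
instance centralizer_subgroupOf_normalizer_normal {G : Type*} [Group G] (S : Subgroup G) :
    ((Subgroup.centralizer (S : Set G)).subgroupOf (Subgroup.normalizer (S : Set G))).Normal := by
  rw [← Subgroup.normalizerMonoidHom_ker]
  exact MonoidHom.normal_ker _

/-!
Frattini argument: every `g ∈ N_G(S)` can be corrected by some `z ∈ C_G(S)` so that `g * z`
normalizes `C`. Hence `M := N_G(C) ∩ N_G(S)` maps onto `N_G(S)/C_G(S)`, and it also maps into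
`N_G(C)/C`; because `N_{C_G(S)}(C) = C`, both maps have kernel `M ∩ C`. So
`N_G(S)/C_G(S) ≅ M/(M ∩ C)` embeds into `N_G(C)/C`, onto when `M = N_G(C)`.
-/

section

variable {G : Type*} [Group G]

theorem conjSub_conjSub (H : Subgroup G) (g h : G) :
    conjSub (conjSub H g) h = conjSub H (g * h) := by
  simp only [conjSub, Subgroup.map_map, mul_inv_rev, map_mul]
  rfl

theorem conjSub_eq_self_iff {H : Subgroup G} {g : G} :
    conjSub H g = H ↔ g ∈ Subgroup.normalizer (H : Set G) := by
  rw [← inv_mem_iff, Subgroup.mem_normalizer_iff_map_conj_eq]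
  rfl

namespace Subgroup

theorem eq_sup_of_forall_exists_mul_mem {N Z M : Subgroup G} (hZ : Z ≤ N) (hM : M ≤ N)
    (h : ∀ g ∈ N, ∃ z ∈ Z, g * z ∈ M) : N = Z ⊔ M := by
  refine le_antisymm (fun g hg ↦ ?_) (sup_le hZ hM)
  obtain ⟨z, hz, hgz⟩ := h g hg
  simpa using mul_mem (mem_sup_right hgz) (mem_sup_left (inv_mem hz) : z⁻¹ ∈ Z ⊔ M)

theorem normalizer_le_normalizer_centralizer (s : Set G) :
    normalizer s ≤ normalizer (centralizer s : Set G) :=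
  le_normalizer_of_normal_subgroupOf (centralizer_le_normalizer s)

theorem ker_mk'_comp_inclusion {M N Z : Subgroup G} [(Z.subgroupOf N).Normal] (hMN : M ≤ N) :
    ((QuotientGroup.mk' (Z.subgroupOf N)).comp (inclusion hMN)).ker = Z.subgroupOf M := by
  ext m
  simp [mem_subgroupOf]

theorem mk'_comp_inclusion_surjective {M N Z : Subgroup G} [(Z.subgroupOf N).Normal]
    (hMN : M ≤ N) (h : ∀ g ∈ N, ∃ z ∈ Z, g * z ∈ M) :
    Function.Surjective ((QuotientGroup.mk' (Z.subgroupOf N)).comp (inclusion hMN)) := by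
  rintro ⟨g, hg⟩
  obtain ⟨z, hz, hgz⟩ := h g hg
  refine ⟨⟨g * z, hgz⟩, QuotientGroup.eq.mpr ?_⟩
  simpa [mem_subgroupOf] using hz

end Subgroup

theorem MonoidHom.exists_injective_comp_eq_of_ker_eq {A Q R : Type*} [Group A] [Group Q]
    [Group R] (φ : A →* Q) (hφ : Function.Surjective φ) (χ : A →* R) (h : φ.ker = χ.ker) :
    ∃ f : Q →* R, Function.Injective f ∧ f.comp φ = χ := by
  refine ⟨φ.liftOfSurjective hφ ⟨χ, h.le⟩, (injective_iff_map_eq_one _).mpr fun q hq ↦ ?_,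
    φ.liftOfRightInverse_comp _ _ _⟩
  obtain ⟨a, rfl⟩ := hφ q
  rw [liftOfRightInverse_comp_apply] at hq
  exact h.ge hq

end

theorem weyl_embedding_from_torus_general {G : Type*} [Group G] (S C : Subgroup G)
    (h1 : (Subgroup.normalizer (C : Set G)) ⊓ Subgroup.centralizer (S : Set G) = C)
    (hconj : ∀ g ∈ (Subgroup.normalizer (S : Set G)), ∃ h ∈ Subgroup.centralizer (S : Set G),
        conjSub (conjSub C g) h = C) :
    ((Subgroup.normalizer (S : Set G)) : Set G) = (Subgroup.centralizer (S : Set G) : Set G) *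
        (((Subgroup.normalizer (C : Set G)) ⊓ (Subgroup.normalizer (S : Set G)) : Subgroup G) : Set G) ∧
      (∃ f : (↥(Subgroup.normalizer (S : Set G)) ⧸ (Subgroup.centralizer (S : Set G)).subgroupOf (Subgroup.normalizer (S : Set G))) →*
          (↥(Subgroup.normalizer (C : Set G)) ⧸ C.subgroupOf (Subgroup.normalizer (C : Set G))), Function.Injective f) ∧
      ((Subgroup.normalizer (C : Set G)) ≤ (Subgroup.normalizer (S : Set G)) →
        Nonempty ((↥(Subgroup.normalizer (S : Set G)) ⧸
            (Subgroup.centralizer (S : Set G)).subgroupOf (Subgroup.normalizer (S : Set G))) ≃*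
          (↥(Subgroup.normalizer (C : Set G)) ⧸ C.subgroupOf (Subgroup.normalizer (C : Set G))))) := by
  set N := Subgroup.normalizer (S : Set G)
  set Z := Subgroup.centralizer (S : Set G)
  set NC := Subgroup.normalizer (C : Set G)
  have hZN : Z ≤ N := Subgroup.centralizer_le_normalizer _
  have frattini : ∀ g ∈ N, ∃ z ∈ Z, g * z ∈ NC ⊓ N := fun g hg ↦ by
    obtain ⟨z, hz, hgz⟩ := hconj g hg
    rw [conjSub_conjSub, conjSub_eq_self_iff] at hgz
    exact ⟨z, hz, hgz, N.mul_mem hg (hZN hz)⟩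
  have hker : Z.subgroupOf (NC ⊓ N) = C.subgroupOf (NC ⊓ N) := by
    rw [Subgroup.subgroupOf_inj, ← inf_assoc, ← inf_assoc, inf_comm Z, h1,
      inf_eq_left.mpr (Subgroup.le_normalizer : C ≤ NC)]
  obtain ⟨f, hf_inj, hf⟩ := MonoidHom.exists_injective_comp_eq_of_ker_eq _
    (Subgroup.mk'_comp_inclusion_surjective inf_le_right frattini)
    ((QuotientGroup.mk' (C.subgroupOf NC)).comp (Subgroup.inclusion inf_le_left))
    (by rw [Subgroup.ker_mk'_comp_inclusion, Subgroup.ker_mk'_comp_inclusion, hker])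
  refine ⟨?_, ⟨f, hf_inj⟩, fun hNC ↦ ⟨MulEquiv.ofBijective f ⟨hf_inj, ?_⟩⟩⟩
  · have hNZ : N ≤ Subgroup.normalizer (Z : Set G) :=
      Subgroup.normalizer_le_normalizer_centralizer _
    rw [← Subgroup.coe_mul_of_right_le_normalizer_left Z (NC ⊓ N) (inf_le_right.trans hNZ),
      ← Subgroup.eq_sup_of_forall_exists_mul_mem hZN inf_le_right frattini]
  · have hχ := Subgroup.mk'_comp_inclusion_surjective (Z := C) (inf_le_left : NC ⊓ N ≤ NC)
      fun g hg ↦ ⟨1, one_mem C, by simpa using ⟨hg, hNC hg⟩⟩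
    rw [← hf, MonoidHom.coe_comp] at hχ
    exact hχ.of_comp

/-- Let `G` be a group, `S` a subgroup of `G`, and `C` a subgroup with `C ≤ C_G(S)`.
Assume `N_{C_G(S)}(C) = C`, and that every `N_G(S)`-conjugate of `C` is
`C_G(S)`-conjugate to `C`.  Then `N_G(S) = C_G(S)·N_{N_G(S)}(C)`, and there is an
injective group homomorphism from `N_G(S)/C_G(S)` into `N_G(C)/C`.  If moreover
`N_G(C) ≤ N_G(S)`, then this gives an isomorphism `N_G(S)/C_G(S) ≅ N_G(C)/C`. -/
theorem weyl_embedding_from_torus {G : Type*} [Group G] (S C : Subgroup G)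
    (hCcent : C ≤ Subgroup.centralizer (S : Set G))
    (h1 : (Subgroup.normalizer (C : Set G)) ⊓ Subgroup.centralizer (S : Set G) = C)
    (hconj : ∀ g ∈ (Subgroup.normalizer (S : Set G)), ∃ h ∈ Subgroup.centralizer (S : Set G),
        conjSub (conjSub C g) h = C) :
    ((Subgroup.normalizer (S : Set G)) : Set G) = (Subgroup.centralizer (S : Set G) : Set G) *
        (((Subgroup.normalizer (C : Set G)) ⊓ (Subgroup.normalizer (S : Set G)) : Subgroup G) : Set G) ∧
      (∃ f : (↥(Subgroup.normalizer (S : Set G)) ⧸ (Subgroup.centralizer (S : Set G)).subgroupOf (Subgroup.normalizer (S : Set G))) →*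
          (↥(Subgroup.normalizer (C : Set G)) ⧸ C.subgroupOf (Subgroup.normalizer (C : Set G))), Function.Injective f) ∧
      ((Subgroup.normalizer (C : Set G)) ≤ (Subgroup.normalizer (S : Set G)) →
        Nonempty ((↥(Subgroup.normalizer (S : Set G)) ⧸
            (Subgroup.centralizer (S : Set G)).subgroupOf (Subgroup.normalizer (S : Set G))) ≃*
          (↥(Subgroup.normalizer (C : Set G)) ⧸ C.subgroupOf (Subgroup.normalizer (C : Set G))))) :=
  weyl_embedding_from_torus_general S C h1 hconj
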